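/- Let g_m(z) = b_m(z) − a_m(z), where a_m(z) = a(z) for |z| ≥ 1/m, a_m(z) = m z a(1/m) for |z| ≤ 1/m, b_m(z) = b(z) for |z| ≤ m, and b_m(z) = (z/m) b(m) for |z| ≥ m. Then for every z ∈ ℂ, g_m(z) → z Log|z|² as m → ∞ (with the convention 0·Log 0 = 0), and each g_m is globally Lipschitz on ℂ. -/

import Mathlib

open Filter

/-- The function `A` from (2.2). -/
noncomputable def Afun (t : ℝ) : ℝ :=
  if t ≤ Real.exp (-3) then -(t ^ 2) * Real.log (t ^ 2)
  else 3 * t ^ 2 + 4 * Real.exp (-3) * t - Real.exp (-6)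

/-- `B(s) = s² Log(s²) + A(s)`. -/
noncomputable def Bfun (t : ℝ) : ℝ := t ^ 2 * Real.log (t ^ 2) + Afun t

/-- `a(z) = (z/|z|²) A(|z|)`, `a(0) = 0`. -/
noncomputable def afun (z : ℂ) : ℂ :=
  if z = 0 then 0 else z / ((‖z‖ : ℂ) ^ 2) * (Afun ‖z‖ : ℝ)

/-- `b(z) = (z/|z|²) B(|z|)`, `b(0) = 0`. -/
noncomputable def bfun (z : ℂ) : ℂ :=
  if z = 0 then 0 else z / ((‖z‖ : ℂ) ^ 2) * (Bfun ‖z‖ : ℝ)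

/-- `a_m(z) = a(z)` for `|z| ≥ 1/m` and `a_m(z) = m z a(1/m)` for `|z| ≤ 1/m`. -/
noncomputable def am (m : ℕ) (z : ℂ) : ℂ :=
  if (1 : ℝ) / m ≤ ‖z‖ then afun z else (m : ℂ) * z * afun ((1 : ℂ) / m)

/-- `b_m(z) = b(z)` for `|z| ≤ m` and `b_m(z) = (z/m) b(m)` for `|z| ≥ m`. -/
noncomputable def bm (m : ℕ) (z : ℂ) : ℂ :=
  if ‖z‖ ≤ (m : ℝ) then bfun z else z / (m : ℂ) * bfun (m : ℂ)

/-- The regularized nonlinearity `g_m = b_m − a_m`. -/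
noncomputable def gm (m : ℕ) (z : ℂ) : ℂ := bm m z - am m z

/-!
Both `b_m` and `a_m` are radial maps `z ↦ ψ(|z|) z/|z|` whose profile `ψ` vanishes at `0`, and
such a map is `3K`-Lipschitz as soon as `ψ` is `K`-Lipschitz on `[0, ∞)`. The profiles are
Lipschitz piece by piece: `A(r)/r` and `B(r)/r` are `C¹` on compact subintervals of `(0, ∞)`,
`A(r)/r = 3r + 4e⁻³ - e⁻⁶/r` is `4`-Lipschitz on `[e⁻³, ∞)`, and the cut-offs are linear.
For `z ≠ 0` and `m ≥ max(|z|, 1/|z|)` no cut-off is active, so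
`g_m(z) = z (B - A)(|z|)/|z|² = z Log|z|²`.
-/

open Set Real
open scoped NNReal

lemma LipschitzOnWith.congr {α β : Type*} [PseudoEMetricSpace α] [PseudoEMetricSpace β]
    {f g : α → β} {s : Set α} {K : ℝ≥0} (hf : LipschitzOnWith K f s) (h : EqOn g f s) :
    LipschitzOnWith K g s := fun x hx y hy => by
  rw [h hx, h hy]; exact hf hx hy

lemma LipschitzOnWith.Ici_of_Icc_of_Ici {β : Type*} [PseudoMetricSpace β] {f : ℝ → β}
    {K : ℝ≥0} {a b : ℝ} (hab : a ≤ b) (h₁ : LipschitzOnWith K f (Icc a b))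
    (h₂ : LipschitzOnWith K f (Ici b)) : LipschitzOnWith K f (Ici a) := by
  rw [lipschitzOnWith_iff_dist_le_mul] at *
  have key : ∀ x ∈ Ici a, ∀ y ∈ Ici a, x ≤ y → dist (f x) (f y) ≤ K * dist x y := by
    intro x hx y hy hxy
    rcases le_total y b with hyb | hby
    · exact h₁ x ⟨hx, hxy.trans hyb⟩ y ⟨hy, hyb⟩
    rcases le_total b x with hbx | hxb
    · exact h₂ x hbx y (hbx.trans hxy)
    calc dist (f x) (f y) ≤ dist (f x) (f b) + dist (f b) (f y) := dist_triangle _ _ _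
      _ ≤ K * dist x b + K * dist b y :=
        add_le_add (h₁ x ⟨hx, hxb⟩ b ⟨hab, le_rfl⟩) (h₂ b self_mem_Ici y hby)
      _ = K * dist x y := by
        rw [← mul_add, dist_add_dist_of_mem_segment (Icc_subset_segment ⟨hxb, hby⟩)]
  intro x hx y hy
  rcases le_total x y with h | h
  · exact key x hx y hy h
  · rw [dist_comm, dist_comm x]; exact key y hy x hx h

lemma exists_lipschitzOnWith_Ici_of_Icc_of_Ici {β : Type*} [PseudoMetricSpace β] {f : ℝ → β}
    {a b : ℝ} (hab : a ≤ b) (h₁ : ∃ K, LipschitzOnWith K f (Icc a b))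
    (h₂ : ∃ K, LipschitzOnWith K f (Ici b)) : ∃ K, LipschitzOnWith K f (Ici a) := by
  obtain ⟨K₁, h₁⟩ := h₁
  obtain ⟨K₂, h₂⟩ := h₂
  exact ⟨max K₁ K₂,
    (h₁.weaken le_sup_left).Ici_of_Icc_of_Ici hab (h₂.weaken le_sup_right)⟩

section Radial

variable {E : Type*} [NormedAddCommGroup E] [NormedSpace ℝ E] {ψ : ℝ → ℝ} {K : ℝ≥0}

lemma abs_div_le_of_lipschitzOnWith (hψ : LipschitzOnWith K ψ (Ici 0)) (hψ₀ : ψ 0 = 0)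
    {a : ℝ} (ha : 0 ≤ a) : |ψ a / a| ≤ K := by
  have := (lipschitzOnWith_iff_dist_le_mul.mp hψ) a ha 0 self_mem_Ici
  rw [Real.dist_eq, Real.dist_eq, hψ₀, sub_zero, sub_zero, abs_of_nonneg ha] at this
  rw [abs_div, abs_of_nonneg ha]
  exact div_le_of_le_mul₀ ha K.coe_nonneg this

lemma abs_div_sub_div_mul_le_of_lipschitzOnWith (hψ : LipschitzOnWith K ψ (Ici 0))
    (hψ₀ : ψ 0 = 0) {a b : ℝ} (hb : 0 ≤ b) (hba : b ≤ a) :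
    |ψ a / a - ψ b / b| * b ≤ 2 * K * (a - b) := by
  rcases hb.eq_or_lt with rfl | hb
  · rw [mul_zero, sub_zero]; positivity
  have ha : 0 < a := hb.trans_le hba
  have hab : |ψ a - ψ b| ≤ K * (a - b) := by
    have := (lipschitzOnWith_iff_dist_le_mul.mp hψ) a ha.le b hb.le
    rwa [Real.dist_eq, Real.dist_eq, abs_of_nonneg (sub_nonneg.mpr hba)] at this
  have hψb : |ψ b| ≤ K * b := by
    have := abs_div_le_of_lipschitzOnWith hψ hψ₀ hb.le
    rwa [abs_div, abs_of_pos hb, div_le_iff₀ hb] at this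
  have hsplit : (ψ a / a - ψ b / b) * b = (ψ a - ψ b) * (b / a) - ψ b * ((a - b) / a) := by
    field_simp; ring
  have hba' : b / a ≤ 1 := (div_le_one ha).mpr hba
  calc |ψ a / a - ψ b / b| * b = |(ψ a - ψ b) * (b / a) - ψ b * ((a - b) / a)| := by
        rw [← hsplit, abs_mul, abs_of_pos hb]
    _ ≤ |ψ a - ψ b| * (b / a) + |ψ b| * ((a - b) / a) := by
        refine (abs_sub _ _).trans ?_
        rw [abs_mul, abs_mul, abs_of_pos (div_pos hb ha),
          abs_of_nonneg (div_nonneg (sub_nonneg.mpr hba) ha.le)]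
    _ ≤ K * (a - b) * 1 + K * b * ((a - b) / a) := by gcongr
    _ = K * (a - b) * (1 + b / a) := by ring
    _ ≤ K * (a - b) * 2 := by gcongr; linarith
    _ = 2 * K * (a - b) := by ring

-- At `x = 0` the formula gives `0` because `0 / 0 = 0`, so no case split on `x = 0` is needed.
theorem lipschitzWith_radial (hψ : LipschitzOnWith K ψ (Ici 0)) (hψ₀ : ψ 0 = 0) :
    LipschitzWith (3 * K) (fun x : E => (ψ ‖x‖ / ‖x‖) • x) := by
  have key : ∀ x y : E, ‖y‖ ≤ ‖x‖ →
      ‖(ψ ‖x‖ / ‖x‖) • x - (ψ ‖y‖ / ‖y‖) • y‖ ≤ 3 * K * ‖x - y‖ := by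
    intro x y hyx
    have hsplit : (ψ ‖x‖ / ‖x‖) • x - (ψ ‖y‖ / ‖y‖) • y =
        (ψ ‖x‖ / ‖x‖) • (x - y) + (ψ ‖x‖ / ‖x‖ - ψ ‖y‖ / ‖y‖) • y := by
      rw [smul_sub, sub_smul]; abel
    have hnorm : ‖x‖ - ‖y‖ ≤ ‖x - y‖ := norm_sub_norm_le x y
    calc _ ≤ |ψ ‖x‖ / ‖x‖| * ‖x - y‖ + |ψ ‖x‖ / ‖x‖ - ψ ‖y‖ / ‖y‖| * ‖y‖ := by
          rw [hsplit, ← Real.norm_eq_abs, ← Real.norm_eq_abs, ← norm_smul, ← norm_smul]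
          exact norm_add_le _ _
      _ ≤ K * ‖x - y‖ + 2 * K * (‖x‖ - ‖y‖) := by
          refine add_le_add ?_ ?_
          · exact mul_le_mul_of_nonneg_right
              (abs_div_le_of_lipschitzOnWith hψ hψ₀ (norm_nonneg x)) (norm_nonneg _)
          · exact abs_div_sub_div_mul_le_of_lipschitzOnWith hψ hψ₀ (norm_nonneg y) hyx
      _ ≤ K * ‖x - y‖ + 2 * K * ‖x - y‖ := by gcongr
      _ = 3 * K * ‖x - y‖ := by ring
  refine LipschitzWith.of_dist_le_mul fun x y => ?_
  rw [dist_eq_norm, dist_eq_norm, NNReal.coe_mul, NNReal.coe_ofNat]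
  rcases le_total ‖y‖ ‖x‖ with h | h
  · exact key x y h
  · rw [norm_sub_rev, norm_sub_rev x]; exact key y x h

end Radial

lemma exp_neg_six : exp (-6) = exp (-3) ^ 2 := by
  rw [← exp_nat_mul]; norm_num

lemma Afun_of_le {t : ℝ} (h : t ≤ exp (-3)) : Afun t = -(t ^ 2) * log (t ^ 2) := if_pos h

lemma Afun_of_ge {t : ℝ} (h : exp (-3) ≤ t) :
    Afun t = 3 * t ^ 2 + 4 * exp (-3) * t - exp (-6) := by
  rcases h.eq_or_lt with rfl | h
  · rw [Afun_of_le le_rfl, log_pow, log_exp, exp_neg_six]; push_cast; ring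
  · exact if_neg h.not_ge

lemma Bfun_of_le {t : ℝ} (h : t ≤ exp (-3)) : Bfun t = 0 := by
  rw [Bfun, Afun_of_le h]; ring

lemma lipschitzOnWith_Afun_div_Ici : LipschitzOnWith 4 (fun r => Afun r / r) (Ici (exp (-3))) := by
  rw [lipschitzOnWith_iff_dist_le_mul]
  intro x (hx : exp (-3) ≤ x) y (hy : exp (-3) ≤ y)
  have hx₀ : 0 < x := (exp_pos _).trans_le hx
  have hy₀ : 0 < y := (exp_pos _).trans_le hy
  have hxy : exp (-6) ≤ x * y := by rw [exp_neg_six, sq]; gcongr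
  have hfac : Afun x / x - Afun y / y = (3 + exp (-6) / (x * y)) * (x - y) := by
    rw [Afun_of_ge hx, Afun_of_ge hy]; field_simp; ring
  rw [Real.dist_eq, Real.dist_eq, hfac, abs_mul, abs_of_pos (by positivity)]
  gcongr
  have : exp (-6) / (x * y) ≤ 1 := (div_le_one (by positivity)).mpr hxy
  push_cast; linarith

lemma exists_lipschitzOnWith_Afun_div {t : ℝ} (ht : 0 < t) :
    ∃ K, LipschitzOnWith K (fun r => Afun r / r) (Ici t) := by
  set s := min t (exp (-3))
  have hs : 0 < s := lt_min ht (exp_pos _)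
  have hcompact : ∃ K, LipschitzOnWith K (fun r => Afun r / r) (Icc s (exp (-3))) := by
    have hd : ContDiffOn ℝ 1 (fun r => -(r * log (r ^ 2))) (Icc s (exp (-3))) :=
      (contDiffOn_id.mul ((contDiffOn_id.pow 2).log
        fun r hr => pow_ne_zero 2 (hs.trans_le hr.1).ne')).neg
    refine (hd.congr fun r hr => ?_).exists_lipschitzOnWith one_ne_zero (convex_Icc _ _)
      isCompact_Icc
    have hr₀ : r ≠ 0 := (hs.trans_le hr.1).ne'
    rw [Afun_of_le hr.2]; field_simp
  obtain ⟨K, hK⟩ := exists_lipschitzOnWith_Ici_of_Icc_of_Ici (min_le_right _ _) hcompact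
    ⟨4, lipschitzOnWith_Afun_div_Ici⟩
  exact ⟨K, hK.mono (Ici_subset_Ici.mpr (min_le_left _ _))⟩

noncomputable def bmProfile (m : ℕ) (r : ℝ) : ℝ :=
  if r ≤ m then Bfun r / r else Bfun m / m ^ 2 * r

noncomputable def amProfile (m : ℕ) (r : ℝ) : ℝ :=
  if 1 / m ≤ r then Afun r / r else m ^ 2 * Afun (1 / m) * r

lemma bmProfile_zero (m : ℕ) : bmProfile m 0 = 0 := by
  simp [bmProfile]

lemma amProfile_zero (m : ℕ) : amProfile m 0 = 0 := by
  simp [amProfile]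

section Profiles

variable {m : ℕ}

lemma exists_lipschitzOnWith_bmProfile (hm : 0 < m) :
    ∃ K, LipschitzOnWith K (bmProfile m) (Ici 0) := by
  have hm₁ : (1 : ℝ) ≤ m := by exact_mod_cast hm
  have he : exp (-3) ≤ m := (exp_le_one_iff.mpr (by norm_num)).trans hm₁
  refine exists_lipschitzOnWith_Ici_of_Icc_of_Ici (exp_pos _).le ?_
    (exists_lipschitzOnWith_Ici_of_Icc_of_Ici he ?_ ?_)
  · refine (contDiffOn_const (c := (0 : ℝ)).congr fun r hr => ?_).exists_lipschitzOnWith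
      one_ne_zero (convex_Icc _ _) isCompact_Icc
    rw [bmProfile, if_pos (hr.2.trans he), Bfun_of_le hr.2, zero_div]
  · have hd : ContDiffOn ℝ 1 (fun r => r * log (r ^ 2) + (3 * r + 4 * exp (-3) - exp (-6) / r))
        (Icc (exp (-3)) m) := by
      have hne : ∀ r ∈ Icc (exp (-3)) (m : ℝ), r ≠ 0 :=
        fun r hr => ((exp_pos _).trans_le hr.1).ne'
      exact (contDiffOn_id.mul
        ((contDiffOn_id.pow 2).log fun r hr => pow_ne_zero 2 (hne r hr))).add
        (((contDiffOn_const.mul contDiffOn_id).add contDiffOn_const).sub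
          (contDiffOn_const.div contDiffOn_id hne))
    refine (hd.congr fun r hr => ?_).exists_lipschitzOnWith one_ne_zero (convex_Icc _ _)
      isCompact_Icc
    have hr₀ : r ≠ 0 := ((exp_pos _).trans_le hr.1).ne'
    rw [bmProfile, if_pos hr.2, Bfun, Afun_of_ge hr.1]; field_simp
  · refine ⟨_, (lipschitzWith_smul (Bfun m / (m : ℝ) ^ 2)).lipschitzOnWith.congr fun r hr => ?_⟩
    have hm₀ : (m : ℝ) ≠ 0 := by positivity
    simp only [smul_eq_mul]
    rcases (mem_Ici.mp hr).eq_or_lt with rfl | hr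
    · rw [bmProfile, if_pos le_rfl]; field_simp
    · rw [bmProfile, if_neg hr.not_ge]

lemma exists_lipschitzOnWith_amProfile (hm : 0 < m) :
    ∃ K, LipschitzOnWith K (amProfile m) (Ici 0) := by
  have hm₀ : (m : ℝ) ≠ 0 := by positivity
  have hm' : (0 : ℝ) < 1 / m := by positivity
  refine exists_lipschitzOnWith_Ici_of_Icc_of_Ici hm'.le ?_ ?_
  · refine ⟨_, (lipschitzWith_smul ((m : ℝ) ^ 2 * Afun (1 / m))).lipschitzOnWith.congr
      fun r hr => ?_⟩
    simp only [smul_eq_mul]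
    rcases hr.2.eq_or_lt with rfl | hr
    · rw [amProfile, if_pos le_rfl]; field_simp
    · rw [amProfile, if_neg hr.not_ge]
  · obtain ⟨K, hK⟩ := exists_lipschitzOnWith_Afun_div hm'
    exact ⟨K, hK.congr fun r hr => if_pos hr⟩

lemma bm_eq_smul (hm : 0 < m) (z : ℂ) : bm m z = (bmProfile m ‖z‖ / ‖z‖) • z := by
  rcases eq_or_ne z 0 with rfl | hz
  · simp [bm, bfun]
  have hz' : (‖z‖ : ℂ) ≠ 0 := by simpa using hz
  have hm₀ : (m : ℂ) ≠ 0 := by exact_mod_cast hm.ne'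
  rw [Complex.real_smul, bm, bmProfile]
  split_ifs
  · rw [bfun, if_neg hz]; push_cast; field_simp
  · rw [bfun, if_neg hm₀, Complex.norm_natCast]; push_cast; field_simp

lemma am_eq_smul (hm : 0 < m) (z : ℂ) : am m z = (amProfile m ‖z‖ / ‖z‖) • z := by
  rcases eq_or_ne z 0 with rfl | hz
  · simp [am, afun]
  have hz' : (‖z‖ : ℂ) ≠ 0 := by simpa using hz
  have hm₀ : (1 : ℂ) / m ≠ 0 := by simpa using hm.ne'
  rw [Complex.real_smul, am, amProfile]
  split_ifs
  · rw [afun, if_neg hz]; push_cast; field_simp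
  · rw [afun, if_neg hm₀, norm_div, norm_one, Complex.norm_natCast]; push_cast; field_simp

lemma exists_lipschitzWith_bm (hm : 0 < m) : ∃ K, LipschitzWith K (bm m) := by
  obtain ⟨K, hK⟩ := exists_lipschitzOnWith_bmProfile hm
  exact ⟨3 * K, funext (bm_eq_smul hm) ▸ lipschitzWith_radial hK (bmProfile_zero m)⟩

lemma exists_lipschitzWith_am (hm : 0 < m) : ∃ K, LipschitzWith K (am m) := by
  obtain ⟨K, hK⟩ := exists_lipschitzOnWith_amProfile hm
  exact ⟨3 * K, funext (am_eq_smul hm) ▸ lipschitzWith_radial hK (amProfile_zero m)⟩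

end Profiles

lemma gm_eq_of_le {m : ℕ} {z : ℂ} (h₁ : 1 / m ≤ ‖z‖) (h₂ : ‖z‖ ≤ m) :
    gm m z = z * (log (‖z‖ ^ 2) : ℂ) := by
  rcases eq_or_ne z 0 with rfl | hz
  · simp [gm, bm, am, bfun, afun]
  have hz' : (‖z‖ : ℂ) ≠ 0 := by simpa using hz
  rw [gm, bm, am, if_pos h₂, if_pos h₁, bfun, afun, if_neg hz, if_neg hz, Bfun]
  push_cast; field_simp; ring

lemma eventually_gm_eq (z : ℂ) : ∀ᶠ m : ℕ in atTop, gm m z = z * (log (‖z‖ ^ 2) : ℂ) := by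
  rcases eq_or_ne z 0 with rfl | hz
  · exact Eventually.of_forall fun m => by simp [gm, bm, am, bfun, afun]
  have hz₀ : 0 < ‖z‖ := norm_pos_iff.mpr hz
  filter_upwards [tendsto_natCast_atTop_atTop.eventually_ge_atTop ‖z‖,
    tendsto_natCast_atTop_atTop.eventually_ge_atTop (1 / ‖z‖)] with m h₂ h₁
  exact gm_eq_of_le ((one_div_le ((one_div_pos.mpr hz₀).trans_le h₁) hz₀).mpr h₁) h₂

/-- For every `z ∈ ℂ`, `g_m(z) → z Log|z|²` as `m → ∞` (with `0 · Log 0 = 0`), and each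
`g_m` (`m ≥ 1`) is globally Lipschitz on `ℂ`. -/
theorem gm_tendsto_and_lipschitz :
    (∀ z : ℂ, Tendsto (fun m : ℕ => gm m z) atTop
        (nhds (z * (Real.log (‖z‖ ^ 2) : ℂ)))) ∧
      ∀ m : ℕ, 1 ≤ m → ∃ K : NNReal, LipschitzWith K (gm m) := by
  refine ⟨fun z => tendsto_const_nhds.congr' (EventuallyEq.symm (eventually_gm_eq z)),
    fun m hm => ?_⟩
  obtain ⟨Kb, hb⟩ := exists_lipschitzWith_bm hm
  obtain ⟨Ka, ha⟩ := exists_lipschitzWith_am hm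
  exact ⟨Kb + Ka, hb.sub ha⟩
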